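/- Schur's majorization theorem: The diagonal entries of an n×n Hermitian matrix are majorized by its eigenvalues. -/

import Mathlib

/-- The sum of the `k` largest entries of `x`. -/
noncomputable def kLargestSum {n : ℕ} (x : Fin n → ℝ) (k : ℕ) : ℝ :=
  ∑ i ∈ Finset.univ.filter (fun i : Fin n => n - k ≤ (i : ℕ)), (x ∘ Tuple.sort x) i

/-- `x` is majorized by `y`. -/
noncomputable def Majorizes {n : ℕ} (x y : Fin n → ℝ) : Prop :=
  (∀ k, k ≤ n → kLargestSum x k ≤ kLargestSum y k) ∧ ∑ i, x i = ∑ i, y i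

/-!
Writing `A = U D U*` with `U` unitary, the diagonal is `d = S λ` with `S i j = |U i j|²`, and
`S` is doubly stochastic. The sum of any `k` entries of `S λ` is then `∑ c_j λ_j` with weights
`0 ≤ c_j ≤ 1` summing to `k`, and such a sum is at most the sum of the `k` largest `λ_j`:
moving weight from below a threshold to above it can only increase it.
-/

open Finset Matrix

lemma sum_mul_le_sum_of_threshold {ι : Type*} [Fintype ι] [DecidableEq ι] {s : Finset ι}
    {x c : ι → ℝ} {t : ℝ} (hs : ∀ j ∈ s, t ≤ x j) (hsc : ∀ j ∉ s, x j ≤ t)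
    (hc₀ : ∀ j, 0 ≤ c j) (hc₁ : ∀ j, c j ≤ 1) (hc : ∑ j, c j = #s) :
    ∑ j, c j * x j ≤ ∑ j ∈ s, x j := by
  have hterm : ∀ j, c j * (x j - t) ≤ if j ∈ s then x j - t else 0 := by
    intro j
    split_ifs with hj
    · nlinarith [hs j hj, hc₁ j]
    · nlinarith [hsc j hj, hc₀ j]
  calc ∑ j, c j * x j = ∑ j, c j * (x j - t) + t * ∑ j, c j := by
        rw [mul_sum, ← sum_add_distrib]; exact sum_congr rfl fun j _ => by ring
    _ ≤ ∑ j, (if j ∈ s then x j - t else 0) + t * #s := by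
        rw [hc]; gcongr with j; exact hterm j
    _ = ∑ j ∈ s, x j := by
        rw [sum_ite_mem, univ_inter, sum_sub_distrib, sum_const, nsmul_eq_mul]; ring

section TopIndices

variable {n : ℕ}

noncomputable def topIndices (x : Fin n → ℝ) (k : ℕ) : Finset (Fin n) :=
  (univ.filter fun i : Fin n => n - k ≤ (i : ℕ)).map (Tuple.sort x).toEmbedding

lemma mem_topIndices {x : Fin n → ℝ} {k : ℕ} {j : Fin n} :
    j ∈ topIndices x k ↔ n - k ≤ ((Tuple.sort x).symm j : ℕ) := by
  simp [topIndices, mem_map_equiv]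

lemma kLargestSum_eq_sum_topIndices (x : Fin n → ℝ) (k : ℕ) :
    kLargestSum x k = ∑ j ∈ topIndices x k, x j := by
  simp [kLargestSum, topIndices]

lemma card_topIndices (x : Fin n → ℝ) {k : ℕ} (hk : k ≤ n) : #(topIndices x k) = k := by
  have : (univ.filter fun i : Fin n => n - k ≤ (i : ℕ)).map Fin.valEmbedding = Ico (n - k) n := by
    ext i
    simp only [mem_map, mem_filter, mem_univ, true_and, Fin.valEmbedding_apply, mem_Ico]
    exact ⟨by rintro ⟨i, hi, rfl⟩; omega, fun h => ⟨⟨i, h.2⟩, h.1, rfl⟩⟩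
  rw [topIndices, card_map, ← card_map Fin.valEmbedding, this, Nat.card_Ico]
  omega

lemma exists_threshold_topIndices (x : Fin n → ℝ) (k : ℕ) :
    ∃ t, (∀ j ∈ topIndices x k, t ≤ x j) ∧ ∀ j ∉ topIndices x k, x j ≤ t := by
  obtain _ | m := n
  · exact ⟨0, fun j => j.elim0, fun j => j.elim0⟩
  -- the position of the smallest selected entry, or of the largest entry when `k = 0`
  let p : Fin (m + 1) := ⟨min (m + 1 - k) m, by omega⟩
  have hx (j) : x j = (x ∘ Tuple.sort x) ((Tuple.sort x).symm j) := by simp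
  refine ⟨x (Tuple.sort x p), fun j hj => ?_, fun j hj => ?_⟩
  · rw [hx j]
    refine Tuple.monotone_sort x (Fin.le_def.2 ?_)
    have := mem_topIndices.1 hj
    simp only [p]; omega
  · rw [hx j]
    refine Tuple.monotone_sort x (Fin.le_def.2 ?_)
    have := mt mem_topIndices.2 hj
    have := ((Tuple.sort x).symm j).isLt
    simp only [p]; omega

end TopIndices

lemma sum_mul_le_kLargestSum {n k : ℕ} (hk : k ≤ n) (x c : Fin n → ℝ) (hc₀ : ∀ j, 0 ≤ c j)
    (hc₁ : ∀ j, c j ≤ 1) (hc : ∑ j, c j = k) :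
    ∑ j, c j * x j ≤ kLargestSum x k := by
  obtain ⟨t, hs, hsc⟩ := exists_threshold_topIndices x k
  rw [kLargestSum_eq_sum_topIndices]
  exact sum_mul_le_sum_of_threshold hs hsc hc₀ hc₁ (by rw [hc, card_topIndices x hk])

theorem majorizes_mulVec_of_mem_doublyStochastic {n : ℕ} {S : Matrix (Fin n) (Fin n) ℝ}
    (hS : S ∈ doublyStochastic ℝ (Fin n)) (x : Fin n → ℝ) : Majorizes (S *ᵥ x) x := by
  refine ⟨fun k hk => ?_, sum_mulVec_of_mem_doublyStochastic hS⟩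
  set T := topIndices (S *ᵥ x) k
  calc kLargestSum (S *ᵥ x) k = ∑ j, (∑ i ∈ T, S i j) * x j := by
        simp only [kLargestSum_eq_sum_topIndices, mulVec, dotProduct, sum_mul]
        exact sum_comm
    _ ≤ kLargestSum x k := by
        refine sum_mul_le_kLargestSum hk x _ (fun j => sum_nonneg fun i _ =>
          nonneg_of_mem_doublyStochastic hS) (fun j => ?_) ?_
        · calc ∑ i ∈ T, S i j ≤ ∑ i, S i j :=
                sum_le_sum_of_subset_of_nonneg (subset_univ T) fun i _ _ =>
                  nonneg_of_mem_doublyStochastic hS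
            _ = 1 := sum_col_of_mem_doublyStochastic hS j
        · rw [sum_comm, sum_congr rfl fun i _ => sum_row_of_mem_doublyStochastic hS i, sum_const,
            nsmul_one, card_topIndices _ hk]

namespace Matrix

variable {𝕜 n : Type*} [RCLike 𝕜] [Fintype n] [DecidableEq n]

theorem map_norm_sq_mem_doublyStochastic {U : Matrix n n 𝕜} (hU : U ∈ unitaryGroup n 𝕜) :
    U.map (‖·‖ ^ 2) ∈ doublyStochastic ℝ n := by
  have hrow (i) : ∑ j, ‖U i j‖ ^ 2 = 1 := by
    have := congr_fun₂ (mem_unitaryGroup_iff.1 hU) i i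
    simp only [mul_apply, star_apply, RCLike.star_def, RCLike.mul_conj, one_apply_eq] at this
    exact_mod_cast this
  have hcol (j) : ∑ i, ‖U i j‖ ^ 2 = 1 := by
    have := congr_fun₂ (mem_unitaryGroup_iff'.1 hU) j j
    simp only [mul_apply, star_apply, RCLike.star_def, RCLike.conj_mul, one_apply_eq] at this
    exact_mod_cast this
  exact mem_doublyStochastic_iff_sum.2 ⟨fun i j => sq_nonneg _, hrow, hcol⟩

theorem IsHermitian.re_diag_eq_mulVec_eigenvalues {A : Matrix n n 𝕜} (hA : A.IsHermitian) :
    (fun i => RCLike.re (A i i)) =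
      (hA.eigenvectorUnitary : Matrix n n 𝕜).map (‖·‖ ^ 2) *ᵥ hA.eigenvalues := by
  ext i
  conv_lhs => rw [hA.spectral_theorem, Unitary.conjStarAlgAut_apply, mul_apply]
  simp only [mul_diagonal, Function.comp_apply, star_apply, RCLike.star_def, map_sum, mulVec,
    dotProduct, map_apply]
  refine sum_congr rfl fun j _ => ?_
  rw [mul_right_comm, RCLike.mul_conj, ← RCLike.ofReal_pow, ← RCLike.ofReal_mul, RCLike.ofReal_re]

end Matrix

theorem schur_majorization (n : ℕ) (A : Matrix (Fin n) (Fin n) ℂ)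
    (hA : A.IsHermitian) :
    Majorizes (fun i => (A i i).re) hA.eigenvalues := by
  have h := majorizes_mulVec_of_mem_doublyStochastic
    (map_norm_sq_mem_doublyStochastic hA.eigenvectorUnitary.2) hA.eigenvalues
  rwa [← hA.re_diag_eq_mulVec_eigenvalues] at h
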